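/- arXiv:2603.00288 — 5 statements merged into one kernel-verified Lean document; each statement's English description precedes it below -/
import Mathlib

section
/- Let D be a (possibly noncommutative) division ring, V a left D-module, and m ≥ 2. Let A_1, …, A_m ∈ V be linearly independent over D, let α_1, …, α_m, β_1, …, β_m ∈ D be nonzero, and set B_i := α_i • A_i + β_i • A_{i+1} for i = 1, …, m, indices taken modulo m (so B_m = α_m • A_m + β_m • A_1). Then B_m lies in the left D-submodule spanned by B_1, …, B_{m−1} if and only if the ordered product (−α_1⁻¹·β_1)·(−α_2⁻¹·β_2)⋯(−α_m⁻¹·β_m) equals 1 in D. -/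
/-!
Let `W` be the span of `B₁, …, B_{m-1}`. Since `Bⱼ ∈ W`, modulo `W` we have
`Aⱼ ≡ (-αⱼ⁻¹βⱼ) • Aⱼ₊₁`, hence `A₁ ≡ P • A_m` with `P = (-α₁⁻¹β₁)⋯(-α_{m-1}⁻¹β_{m-1})`, and
`B_m ≡ (α_m + β_m P) • A_m`. The same congruences show that `A_m ∈ W` would put all `m`
independent vectors `Aⱼ` into a span of `m - 1` vectors, so `A_m ∉ W`. Thus `B_m ∈ W` iff
`α_m + β_m P = 0`, i.e. iff `P (-α_m⁻¹β_m) = 1`.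
-/

open Submodule

section Ring

variable {R M : Type*} [Ring R] [AddCommGroup M] [Module R M] {U : Submodule R M}

theorem SModEq.mem_iff {x y : M} (h : x ≡ y [SMOD U]) : x ∈ U ↔ y ∈ U := by
  rw [← SModEq.zero, ← SModEq.zero (x := y)]
  exact ⟨h.symm.trans, h.trans⟩

theorem SModEq.apply_zero_of_chain {k : ℕ} {v : Fin (k + 1) → M} {t : Fin k → R}
    (h : ∀ j, v j.castSucc ≡ t j • v j.succ [SMOD U]) :
    v 0 ≡ (List.ofFn t).prod • v (Fin.last k) [SMOD U] := by
  induction k with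
  | zero => simp
  | succ k ih =>
    calc v 0 ≡ t 0 • v 1 [SMOD U] := h 0
      _ ≡ t 0 • ((List.ofFn fun j => t j.succ).prod • v (Fin.last (k + 1))) [SMOD U] :=
        (ih (v := fun i => v i.succ) fun j => h j.succ).smul _
      _ = (List.ofFn t).prod • v (Fin.last (k + 1)) := by
        rw [List.ofFn_succ, List.prod_cons, mul_smul]

theorem Submodule.mem_of_chain_of_last_mem {k : ℕ} {v : Fin (k + 1) → M} {t : Fin k → R}
    (h : ∀ j, v j.castSucc ≡ t j • v j.succ [SMOD U]) (hlast : v (Fin.last k) ∈ U)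
    (i : Fin (k + 1)) : v i ∈ U := by
  induction i using Fin.reverseInduction with
  | last => exact hlast
  | cast j hj => exact (h j).mem_iff.2 (U.smul_mem _ hj)

end Ring

section DivisionRing

variable {D V : Type*} [DivisionRing D] [AddCommGroup V] [Module D V] {W : Submodule D V}

theorem SModEq.of_smul_add_smul_mem {a b : D} {x y : V} (ha : a ≠ 0) (h : a • x + b • y ∈ W) :
    x ≡ (-a⁻¹ * b) • y [SMOD W] := by
  rw [SModEq.sub_mem]
  convert W.smul_mem a⁻¹ h using 1
  rw [smul_add, smul_smul, smul_smul, inv_mul_cancel₀ ha, one_smul, neg_mul, neg_smul,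
    sub_neg_eq_add]

theorem add_mul_eq_zero_iff_mul_neg_inv_mul_eq_one {a b p : D} (ha : a ≠ 0) :
    a + b * p = 0 ↔ p * (-a⁻¹ * b) = 1 := by
  rw [mul_eq_one_comm, neg_mul, neg_mul, neg_eq_iff_eq_neg, mul_assoc, inv_mul_eq_iff_eq_mul₀ ha,
    mul_neg_one, add_eq_zero_iff_eq_neg']

theorem smul_mem_iff_eq_zero {c : D} {x : V} (hx : x ∉ W) : c • x ∈ W ↔ c = 0 := by
  refine ⟨fun h => ?_, fun h => h ▸ (zero_smul D x).symm ▸ W.zero_mem⟩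
  by_contra hc
  exact hx ((W.smul_mem_iff hc).1 h)

theorem cyclic_smul_add_smul_mem_span_iff {n : ℕ} {A : Fin (n + 2) → V}
    (hA : LinearIndependent D A) {α β : Fin (n + 2) → D} (hα : ∀ i, α i ≠ 0) :
    α (Fin.last _) • A (Fin.last _) + β (Fin.last _) • A 0 ∈
        span D (Set.range fun j : Fin (n + 1) =>
          α j.castSucc • A j.castSucc + β j.castSucc • A j.succ) ↔
      (List.ofFn fun i => -(α i)⁻¹ * β i).prod = 1 := by
  set W := span D (Set.range fun j : Fin (n + 1) =>
    α j.castSucc • A j.castSucc + β j.castSucc • A j.succ)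
  have hstep (j : Fin (n + 1)) :
      A j.castSucc ≡ (-(α j.castSucc)⁻¹ * β j.castSucc) • A j.succ [SMOD W] :=
    .of_smul_add_smul_mem (hα _) (subset_span ⟨j, rfl⟩)
  have hlast : A (Fin.last _) ∉ W := by
    intro h
    have : Module.Finite D W := Module.Finite.span_of_finite D (Set.finite_range _)
    have hAW : span D (Set.range A) ≤ W :=
      span_le.2 (Set.range_subset_iff.2 (Submodule.mem_of_chain_of_last_mem hstep h))
    have hcard := (finrank_span_eq_card hA).symm.trans_le
      ((Submodule.finrank_mono hAW).trans (finrank_range_le_card _))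
    simp at hcard
  have hcyc : α (Fin.last _) • A (Fin.last _) + β (Fin.last _) • A 0 ≡
      (α (Fin.last _) + β (Fin.last _) *
        (List.ofFn fun j : Fin (n + 1) => -(α j.castSucc)⁻¹ * β j.castSucc).prod) •
        A (Fin.last _) [SMOD W] := by
    rw [add_smul, mul_smul]
    exact SModEq.rfl.add ((SModEq.apply_zero_of_chain hstep).smul _)
  rw [hcyc.mem_iff, smul_mem_iff_eq_zero hlast, add_mul_eq_zero_iff_mul_neg_inv_mul_eq_one (hα _),
    List.ofFn_succ' (fun i => -(α i)⁻¹ * β i), List.prod_concat]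

end DivisionRing

/-- Noncommutative Menelaus: `B_m` lies in the span of `B₁, …, B_{m-1}` iff the ordered
product `(-α₁⁻¹β₁)⋯(-α_m⁻¹β_m)` equals `1`. -/
theorem stmt1 (D : Type*) [DivisionRing D] (V : Type*) [AddCommGroup V] [Module D V]
    (m : ℕ) (hm : 2 ≤ m)
    (A : Fin m → V) (hA : LinearIndependent D A)
    (α β : Fin m → D) (hα : ∀ i, α i ≠ 0)
    (B : Fin m → V)
    (hB : ∀ i : Fin m,
      B i = α i • A i + β i • A ⟨((i : ℕ) + 1) % m, Nat.mod_lt _ (by omega)⟩) :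
    B ⟨m - 1, by omega⟩ ∈ Submodule.span D (B '' {i : Fin m | (i : ℕ) + 1 < m}) ↔
      (List.ofFn fun i : Fin m => -(α i)⁻¹ * β i).prod = 1 := by
  obtain ⟨n, rfl⟩ : ∃ n, m = n + 2 := ⟨m - 2, by omega⟩
  have hB_castSucc (j : Fin (n + 1)) :
      B j.castSucc = α j.castSucc • A j.castSucc + β j.castSucc • A j.succ := by
    rw [hB]; congr; simp [Nat.mod_eq_of_lt (show (j : ℕ) + 1 < n + 2 by omega)]
  have hB_last : B (Fin.last _) = α (Fin.last _) • A (Fin.last _) + β (Fin.last _) • A 0 := by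
    rw [hB]; congr 3; ext; simp
  have hindex : {i : Fin (n + 2) | (i : ℕ) + 1 < n + 2} = Set.range Fin.castSucc := by
    rw [Fin.range_castSucc]; ext; simp
  rw [hindex, ← Set.range_comp]
  simp only [Function.comp_def, hB_castSucc]
  exact hB_last ▸ cyclic_smul_add_smul_mem_span_iff hA hα
end

section
/- Let D be an infinite division ring (not assumed commutative) and let k ≥ 1. Then there exists an infinite subset S of D^k (the free left D-module of rank k) such that every k-element subset of S is linearly independent over D. -/
/-!
Take `k = finrank D V`. Over an infinite division ring a vector space is not a finite union of
proper subspaces, so for a finite set `s` some vector avoids the spans of all subsets of `s` with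
fewer than `k` elements; these vectors form a punctured cone, hence infinitely many of them exist
and one of them lies outside `s`. Adding it keeps every subset of size at most `k` independent.
Since this property has finite character, the Teichmüller–Tukey lemma gives a maximal set with
it, which by the extension step cannot be finite.
-/

open Module Submodule

section

variable {D V : Type*} [DivisionRing D] [AddCommGroup V] [Module D V]

variable (D) in
def LinearIndepUpTo (k : ℕ) (s : Set V) : Prop :=
  ∀ t : Finset V, ↑t ⊆ s → t.card ≤ k → LinearIndepOn D id (t : Set V)

theorem LinearIndepUpTo.mono {k : ℕ} {s s' : Set V} (h : LinearIndepUpTo D k s') (hs : s ⊆ s') :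
    LinearIndepUpTo D k s :=
  fun t ht => h t (ht.trans hs)

theorem isOfFiniteCharacter_linearIndepUpTo (k : ℕ) :
    Order.IsOfFiniteCharacter {s : Set V | LinearIndepUpTo D k s} :=
  fun _ => ⟨fun h _ hy _ => h.mono hy, fun h t ht => h t ht t.finite_toSet t Set.Subset.rfl⟩

theorem linearIndepUpTo_empty (k : ℕ) : LinearIndepUpTo D k (∅ : Set V) := fun t ht _ => by
  rw [Set.subset_empty_iff.1 ht]
  exact linearIndepOn_empty D id

theorem LinearIndepUpTo.insert {k : ℕ} {s : Set V} {v : V} (hs : LinearIndepUpTo D k s)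
    (hv : ∀ u : Finset V, ↑u ⊆ s → u.card < k → v ∉ span D (u : Set V)) :
    LinearIndepUpTo D k (insert v s) := by
  classical
  intro t ht hcard
  by_cases hvt : v ∈ t
  · have hsub : ↑(t.erase v) ⊆ s := by
      intro x hx
      obtain ⟨hxv, hxt⟩ := Finset.mem_erase.1 hx
      exact (ht hxt).resolve_left hxv
    have hlt : (t.erase v).card < k := by
      rw [Finset.card_erase_of_mem hvt]
      exact Nat.sub_one_lt_of_le (Finset.card_pos.2 ⟨v, hvt⟩) hcard
    rw [← Finset.insert_erase hvt, Finset.coe_insert]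
    exact (hs _ hsub hlt.le).id_insert (hv _ hsub hlt)
  · exact hs t ((Set.subset_insert_iff_of_notMem hvt).1 ht) hcard

variable [Infinite D]

theorem exists_forall_notMem_span_of_card_lt_finrank (s : Finset V) :
    ∃ v : V, ∀ u ⊆ s, u.card < finrank D V → v ∉ span D (u : Set V) := by
  classical
  let U := s.powerset.filter (·.card < finrank D V)
  have hcover : ⋃ u : U, (span D (u : Set V) : Set V) ≠ Set.univ := fun h => by
    obtain ⟨⟨u, hu⟩, htop⟩ := Subspace.exists_eq_top_of_iUnion_eq_univ h
    have hlt : u.card < finrank D V := (Finset.mem_filter.1 hu).2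
    exact (span_lt_top_of_card_lt_finrank (s := (u : Set V)) (by simpa using hlt)).ne htop
  obtain ⟨v, hv⟩ := Set.ne_univ_iff_exists_notMem _ |>.1 hcover
  refine ⟨v, fun u hus hu hvu => hv (Set.mem_iUnion.2 ⟨⟨u, ?_⟩, hvu⟩)⟩
  exact Finset.mem_filter.2 ⟨Finset.mem_powerset.2 hus, hu⟩

theorem infinite_setOf_forall_notMem_span_of_card_lt_finrank (hV : 0 < finrank D V)
    (s : Finset V) :
    {v : V | ∀ u ⊆ s, u.card < finrank D V → v ∉ span D (u : Set V)}.Infinite := by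
  obtain ⟨v, hv⟩ := exists_forall_notMem_span_of_card_lt_finrank (D := D) s
  have hv0 : v ≠ 0 := by simpa using hv ∅ (Finset.empty_subset s) (by simpa using hV)
  refine Set.Infinite.mono ?_
    (((Set.finite_singleton (0 : D)).infinite_compl).image (smul_left_injective D hv0).injOn)
  rintro _ ⟨c, hc, rfl⟩ u hus hu
  rw [smul_mem_iff _ hc]
  exact hv u hus hu

theorem exists_infinite_linearIndepUpTo_finrank (hV : 0 < finrank D V) :
    ∃ S : Set V, S.Infinite ∧ LinearIndepUpTo D (finrank D V) S := by
  obtain ⟨S, -, hS⟩ :=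
    (isOfFiniteCharacter_linearIndepUpTo (D := D) (V := V) (finrank D V)).exists_maximal
      (linearIndepUpTo_empty _)
  refine ⟨S, fun hfin => ?_, hS.prop⟩
  lift S to Finset V using hfin
  obtain ⟨v, hv, hvS⟩ :=
    (infinite_setOf_forall_notMem_span_of_card_lt_finrank hV S).exists_notMem_finset S
  exact hvS (hS.mem_of_prop_insert (hS.prop.insert fun u hu => hv u (Finset.coe_subset.1 hu)))

end

/-- Over an infinite division ring there is an infinite subset of `D^k` any `k` elements of
which are linearly independent. -/
theorem stmt4 (D : Type*) [DivisionRing D] [Infinite D] (k : ℕ) (hk : 1 ≤ k) :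
    ∃ S : Set (Fin k → D), S.Infinite ∧
      ∀ t : Finset (Fin k → D), ↑t ⊆ S → t.card = k →
        LinearIndependent D (fun v : (t : Set (Fin k → D)) => (v : Fin k → D)) := by
  obtain ⟨S, hS, hindep⟩ :=
    exists_infinite_linearIndepUpTo_finrank (D := D) (V := Fin k → D) (by rwa [finrank_fin_fun])
  rw [finrank_fin_fun] at hindep
  exact ⟨S, hS, fun t hts htk => hindep t hts htk.le⟩
end

section
/- Let R be a (possibly noncommutative) ring and M a left R-module. Let A_1, A_2 ∈ M and let ℓ_1, ℓ_2 : M → R be left R-linear functionals such that ℓ_i(A_j) is a unit of R for all i, j ∈ {1, 2}. Then span{A_1, A_2} ∩ ker ℓ_1 = span{A_1, A_2} ∩ ker ℓ_2 (as submodules of M) if and only if ℓ_1(A_1)·ℓ_1(A_2)⁻¹ = ℓ_2(A_1)·ℓ_2(A_2)⁻¹, where the inverses are those of the given units. -/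
/-- Coherence over an arbitrary ring: `span{A₁,A₂} ∩ ker ℓ₁ = span{A₁,A₂} ∩ ker ℓ₂` iff
`ℓ₁(A₁) ℓ₁(A₂)⁻¹ = ℓ₂(A₁) ℓ₂(A₂)⁻¹` (inverses of the given units). -/
theorem stmt7 (R : Type*) [Ring R] (M : Type*) [AddCommGroup M] [Module R M]
    (A₁ A₂ : M) (ℓ₁ ℓ₂ : M →ₗ[R] R)
    (h11 : IsUnit (ℓ₁ A₁)) (h12 : IsUnit (ℓ₁ A₂))
    (h21 : IsUnit (ℓ₂ A₁)) (h22 : IsUnit (ℓ₂ A₂)) :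
    Submodule.span R {A₁, A₂} ⊓ LinearMap.ker ℓ₁ =
        Submodule.span R {A₁, A₂} ⊓ LinearMap.ker ℓ₂ ↔
      ℓ₁ A₁ * (↑h12.unit⁻¹ : R) = ℓ₂ A₁ * (↑h22.unit⁻¹ : R) := by
  set c₁ : R := ℓ₁ A₁ * (↑h12.unit⁻¹ : R) with hc₁
  set c₂ : R := ℓ₂ A₁ * (↑h22.unit⁻¹ : R) with hc₂
  have key₁ : c₁ * ℓ₁ A₂ = ℓ₁ A₁ := by
    rw [hc₁, mul_assoc, IsUnit.val_inv_mul, mul_one]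
  have key₂ : c₂ * ℓ₂ A₂ = ℓ₂ A₁ := by
    rw [hc₂, mul_assoc, IsUnit.val_inv_mul, mul_one]
  have main : ∀ (ℓ ℓ' : M →ₗ[R] R) (c : R), IsUnit (ℓ A₂) → c * ℓ A₂ = ℓ A₁ →
      c * ℓ' A₂ = ℓ' A₁ → ∀ r s : R, ℓ (r • A₁ + s • A₂) = 0 → ℓ' (r • A₁ + s • A₂) = 0 := by
    intro ℓ ℓ' c hu h h' r s h0
    have h0' : (r * c + s) * ℓ A₂ = 0 := by
      rw [add_mul, mul_assoc, h]
      simpa [map_add, map_smul, smul_eq_mul, add_comm] using h0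
    have hs : r * c + s = 0 := by
      have := congrArg (· * (↑hu.unit⁻¹ : R)) h0'
      simpa [mul_assoc, IsUnit.mul_val_inv] using this
    have hs' : s = -(r * c) := eq_neg_of_add_eq_zero_right hs
    rw [map_add, map_smul, map_smul, smul_eq_mul, smul_eq_mul, hs', ← h', neg_mul,
      mul_assoc]
    simp
  constructor
  · intro h
    have hv : A₁ - c₁ • A₂ ∈ Submodule.span R {A₁, A₂} ⊓ LinearMap.ker ℓ₁ := by
      refine ⟨Submodule.mem_span_pair.2 ⟨1, -c₁, by simp [sub_eq_add_neg]⟩, ?_⟩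
      show ℓ₁ (A₁ - c₁ • A₂) = 0
      rw [map_sub, map_smul, smul_eq_mul, key₁, sub_self]
    rw [h] at hv
    have h0 : ℓ₂ A₁ = c₁ * ℓ₂ A₂ := by
      have : ℓ₂ (A₁ - c₁ • A₂) = 0 := hv.2
      rw [map_sub, map_smul, smul_eq_mul, sub_eq_zero] at this
      exact this
    rw [hc₂, h0, mul_assoc, IsUnit.mul_val_inv, mul_one]
  · intro hc
    ext x
    simp only [Submodule.mem_inf, LinearMap.mem_ker]
    constructor <;> rintro ⟨hx, h0⟩ <;> refine ⟨hx, ?_⟩ <;>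
      obtain ⟨r, s, rfl⟩ := Submodule.mem_span_pair.1 hx
    · exact main ℓ₁ ℓ₂ c₁ h12 key₁ (by rw [hc]; exact key₂) r s h0
    · exact main ℓ₂ ℓ₁ c₂ h22 key₂ (by rw [← hc]; exact key₁) r s h0
end

section
/- Let R be a (possibly noncommutative) ring and M a left R-module. Let A_1, A_2 ∈ M and let ℓ_1, ℓ_2 : M → R be left R-linear functionals such that ℓ_i(A_j) is a unit of R for all i, j ∈ {1, 2}. Then span{A_1} + (ker ℓ_1 ∩ ker ℓ_2) = span{A_2} + (ker ℓ_1 ∩ ker ℓ_2) (as submodules of M) if and only if ℓ_1(A_1)·ℓ_1(A_2)⁻¹ = ℓ_2(A_1)·ℓ_2(A_2)⁻¹, where the inverses are those of the given units. -/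
lemma stmt8_aux (R : Type*) [Ring R] (M : Type*) [AddCommGroup M] [Module R M]
    (A₁ A₂ : M) (ℓ₁ ℓ₂ : M →ₗ[R] R)
    (h12 : IsUnit (ℓ₁ A₂)) (h22 : IsUnit (ℓ₂ A₂)) :
    A₁ ∈ Submodule.span R {A₂} ⊔ (LinearMap.ker ℓ₁ ⊓ LinearMap.ker ℓ₂) ↔
      ℓ₁ A₁ * (↑h12.unit⁻¹ : R) = ℓ₂ A₁ * (↑h22.unit⁻¹ : R) := by
  constructor
  · intro h
    rcases Submodule.mem_sup.1 h with ⟨x, hx, y, hy, hxy⟩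
    rcases Submodule.mem_span_singleton.1 hx with ⟨r, rfl⟩
    have h1 : ℓ₁ A₁ = r * ℓ₁ A₂ := by
      rw [← hxy, map_add, LinearMap.mem_ker.1 hy.1, add_zero, map_smul, smul_eq_mul]
    have h2 : ℓ₂ A₁ = r * ℓ₂ A₂ := by
      rw [← hxy, map_add, LinearMap.mem_ker.1 hy.2, add_zero, map_smul, smul_eq_mul]
    rw [h1, h2, mul_assoc, mul_assoc, h12.mul_val_inv, h22.mul_val_inv]
  · intro h
    have f1 : (↑h12.unit⁻¹ : R) * ℓ₁ A₂ = 1 := h12.val_inv_mul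
    have f2 : (↑h22.unit⁻¹ : R) * ℓ₂ A₂ = 1 := h22.val_inv_mul
    have c : R := ℓ₁ A₁ * (↑h12.unit⁻¹ : R)
    have k1 : ℓ₁ (A₁ - (ℓ₁ A₁ * (↑h12.unit⁻¹ : R)) • A₂) = 0 := by
      rw [map_sub, map_smul, smul_eq_mul, mul_assoc, f1, mul_one, sub_self]
    have k2 : ℓ₂ (A₁ - (ℓ₁ A₁ * (↑h12.unit⁻¹ : R)) • A₂) = 0 := by
      rw [map_sub, map_smul, smul_eq_mul, h, mul_assoc, f2, mul_one, sub_self]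
    refine Submodule.mem_sup.2 ⟨(ℓ₁ A₁ * (↑h12.unit⁻¹ : R)) • A₂,
      Submodule.smul_mem _ _ (Submodule.mem_span_singleton_self A₂),
      A₁ - (ℓ₁ A₁ * (↑h12.unit⁻¹ : R)) • A₂,
      ⟨LinearMap.mem_ker.2 k1, LinearMap.mem_ker.2 k2⟩, by abel⟩

/-- Dual coherence over an arbitrary ring:
`span{A₁} + (ker ℓ₁ ∩ ker ℓ₂) = span{A₂} + (ker ℓ₁ ∩ ker ℓ₂)` iff
`ℓ₁(A₁) ℓ₁(A₂)⁻¹ = ℓ₂(A₁) ℓ₂(A₂)⁻¹` (inverses of the given units). -/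
theorem stmt8 (R : Type*) [Ring R] (M : Type*) [AddCommGroup M] [Module R M]
    (A₁ A₂ : M) (ℓ₁ ℓ₂ : M →ₗ[R] R)
    (h11 : IsUnit (ℓ₁ A₁)) (h12 : IsUnit (ℓ₁ A₂))
    (h21 : IsUnit (ℓ₂ A₁)) (h22 : IsUnit (ℓ₂ A₂)) :
    Submodule.span R {A₁} ⊔ (LinearMap.ker ℓ₁ ⊓ LinearMap.ker ℓ₂) =
        Submodule.span R {A₂} ⊔ (LinearMap.ker ℓ₁ ⊓ LinearMap.ker ℓ₂) ↔
      ℓ₁ A₁ * (↑h12.unit⁻¹ : R) = ℓ₂ A₁ * (↑h22.unit⁻¹ : R) := by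
  constructor
  · intro h
    have : A₁ ∈ Submodule.span R {A₂} ⊔ (LinearMap.ker ℓ₁ ⊓ LinearMap.ker ℓ₂) := by
      rw [← h]
      exact Submodule.mem_sup_left (Submodule.mem_span_singleton_self A₁)
    exact (stmt8_aux R M A₁ A₂ ℓ₁ ℓ₂ h12 h22).1 this
  · intro h
    -- symmetric condition
    have hu : h11.unit * h12.unit⁻¹ = h21.unit * h22.unit⁻¹ := by
      ext
      simpa [h11.unit_spec, h21.unit_spec] using h
    have hu' : h12.unit * h11.unit⁻¹ = h22.unit * h21.unit⁻¹ := by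
      have := congrArg (·⁻¹) hu
      simpa [mul_inv_rev] using this
    have h' : ℓ₁ A₂ * (↑h11.unit⁻¹ : R) = ℓ₂ A₂ * (↑h21.unit⁻¹ : R) := by
      have := congrArg Units.val hu'
      simpa [h12.unit_spec, h22.unit_spec] using this
    have m1 : A₁ ∈ Submodule.span R {A₂} ⊔ (LinearMap.ker ℓ₁ ⊓ LinearMap.ker ℓ₂) :=
      (stmt8_aux R M A₁ A₂ ℓ₁ ℓ₂ h12 h22).2 h
    have m2 : A₂ ∈ Submodule.span R {A₁} ⊔ (LinearMap.ker ℓ₁ ⊓ LinearMap.ker ℓ₂) :=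
      (stmt8_aux R M A₂ A₁ ℓ₁ ℓ₂ h11 h21).2 h'
    refine le_antisymm ?_ ?_
    · exact sup_le ((Submodule.span_singleton_le_iff_mem _ _).2 m1) le_sup_right
    · exact sup_le ((Submodule.span_singleton_le_iff_mem _ _).2 m2) le_sup_right
end

section
/- Let D be a (possibly noncommutative) division ring and let a, b ∈ D be nonzero. Then the 4×4 matrix over D with rows (1, a, a, 1), (1, b⁻¹, b⁻¹, 1), (1, a, 1, b), (1, b⁻¹, 1, a⁻¹) is not invertible in the matrix ring M_4(D) if and only if a = b or a = b⁻¹. In particular, if this matrix is not invertible, then a·b = b·a. -/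
open Matrix

/-- A square matrix over a division ring with a nonzero left-annihilating row vector is
not a unit. -/
lemma aux_not_isUnit_of_left_ann {D : Type*} [DivisionRing D] {n : ℕ}
    {A : Matrix (Fin n) (Fin n) D} {v : Fin n → D} (hv : v ≠ 0)
    (h : v ᵥ* A = 0) : ¬ IsUnit A := by
  intro hu
  obtain ⟨B, hAB, hBA⟩ := isUnit_iff_exists.mp hu
  apply hv
  have h1 : v ᵥ* (A * B) = v := by rw [hAB, Matrix.vecMul_one]
  rw [← Matrix.vecMul_vecMul, h, Matrix.zero_vecMul] at h1
  exact h1.symm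

/-- A square matrix over a division ring with trivial left kernel is a unit. -/
lemma aux_isUnit_of_left_ker_trivial {D : Type*} [DivisionRing D] {n : ℕ}
    {A : Matrix (Fin n) (Fin n) D}
    (h : ∀ v : Fin n → D, v ᵥ* A = 0 → v = 0) : IsUnit A := by
  have hinj : Function.Injective A.vecMulLinear := by
    rw [← LinearMap.ker_eq_bot, LinearMap.ker_eq_bot']
    intro v hv
    exact h v (by simpa [Matrix.vecMulLinear_apply] using hv)
  have hsurj : Function.Surjective A.vecMulLinear :=
    (LinearMap.injective_iff_surjective_of_finrank_eq_finrank rfl).mp hinj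
  have hsurj' : Function.Surjective A.vecMul := by
    simpa [Matrix.coe_vecMulLinear] using hsurj
  obtain ⟨B, hBA⟩ := Matrix.vecMul_surjective_iff_exists_left_inverse.mp hsurj'
  have hAB : A * B = 1 := by
    have h0 : (A * B - 1) * A = 0 := by
      rw [Matrix.sub_mul, Matrix.one_mul, Matrix.mul_assoc, hBA, Matrix.mul_one, sub_self]
    have hrow : ∀ i, (A * B - 1) i = 0 := by
      intro i
      apply h
      funext j
      have h2 := congrFun (congrFun h0 i) j
      simpa [Matrix.mul_apply, Matrix.vecMul, dotProduct] using h2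
    have h3 : A * B - 1 = 0 := Matrix.ext fun i j => by
      have h4 := congrFun (hrow i) j
      simpa using h4
    exact sub_eq_zero.mp h3
  exact ⟨⟨A, B, hAB, hBA⟩, rfl⟩

/-- The core noncommutative computation: the symmetric relation forces `(w+1)(u+1) = 1`
when `u ≠ w`. -/
lemma aux_key2 {D : Type*} [DivisionRing D] {u w : D} (hu : u ≠ 0) (hw : w ≠ 0)
    (huw : u ≠ w)
    (hH : u + u * w⁻¹ = w + w * u⁻¹) : (w + 1) * (u + 1) = 1 := by
  have hwz : w * (w⁻¹ * u) = u := by rw [← mul_assoc, mul_inv_cancel₀ hw, one_mul]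
  have hHu : u * u + u * (w⁻¹ * u) = w * u + w := by
    have h := congrArg (· * u) hH
    simp only [add_mul] at h
    rwa [mul_assoc u w⁻¹ u, mul_assoc w u⁻¹ u, inv_mul_cancel₀ hu, mul_one] at h
  have hK : (w⁻¹ * u) * u + (w⁻¹ * u) * (w⁻¹ * u) = u + 1 := by
    apply mul_left_cancel₀ hw
    calc w * ((w⁻¹ * u) * u + (w⁻¹ * u) * (w⁻¹ * u))
        = (w * (w⁻¹ * u)) * u + (w * (w⁻¹ * u)) * (w⁻¹ * u) := by noncomm_ring
      _ = u * u + u * (w⁻¹ * u) := by rw [hwz]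
      _ = w * u + w := hHu
      _ = w * (u + 1) := by noncomm_ring
  have hz1 : w⁻¹ * u - 1 ≠ 0 := by
    intro h0
    have h1 : w⁻¹ * u = 1 := by rwa [sub_eq_zero] at h0
    exact huw (by rw [← hwz, h1, mul_one])
  have hK2 : (w⁻¹ * u - 1) * u = (w⁻¹ * u - 1) * (-(1 + w⁻¹ * u)) := by
    have hzu : (w⁻¹ * u) * u = u + 1 - (w⁻¹ * u) * (w⁻¹ * u) := by
      rw [← hK]; noncomm_ring
    rw [sub_mul, one_mul, hzu]; noncomm_ring
  have hu_eq : u = -(1 + w⁻¹ * u) := mul_left_cancel₀ hz1 hK2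
  have hwu : w * u = -(w + u) := by
    calc w * u = w * (-(1 + w⁻¹ * u)) := by rw [← hu_eq]
      _ = -(w + w * (w⁻¹ * u)) := by noncomm_ring
      _ = -(w + u) := by rw [hwz]
  calc (w + 1) * (u + 1) = w * u + (w + u + 1) := by noncomm_ring
    _ = -(w + u) + (w + u + 1) := by rw [hwu]
    _ = 1 := by abel

lemma aux_cancel4 {D : Type*} [DivisionRing D] {x y : D} (hx : x ≠ 0) (hy : y ≠ 0) :
    (x⁻¹ * y) * (y⁻¹ * x) = 1 := by
  rw [mul_assoc, ← mul_assoc y y⁻¹ x, mul_inv_cancel₀ hy, one_mul, inv_mul_cancel₀ hx]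

lemma aux_invmulself {D : Type*} [DivisionRing D] {b : D} (hw : b - 1 ≠ 0) :
    (b - 1)⁻¹ * b = 1 + (b - 1)⁻¹ := by
  apply mul_left_cancel₀ hw
  rw [← mul_assoc, mul_add, mul_one, mul_inv_cancel₀ hw, one_mul]
  exact (sub_add_cancel b 1).symm

/-- If `a ≠ b` and `a ≠ b⁻¹`, the 2×2 reduced system only has the trivial solution. -/
lemma aux_key {D : Type*} [DivisionRing D] {a b : D} (ha : a ≠ 0) (hb : b ≠ 0)
    (hab : a ≠ b) (hab' : a ≠ b⁻¹) {v0 v1 : D}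
    (E1 : v0 * (a - 1) + v1 * (b⁻¹ - 1) = 0)
    (E2 : v0 * (1 - b) + v1 * (1 - a⁻¹) = 0) : v0 = 0 ∧ v1 = 0 := by
  have hbinv : b⁻¹ * (b - 1) = 1 - b⁻¹ := by rw [mul_sub, inv_mul_cancel₀ hb, mul_one]
  have hainv : a⁻¹ * (a - 1) = 1 - a⁻¹ := by rw [mul_sub, inv_mul_cancel₀ ha, mul_one]
  have F1 : v0 * (a - 1) = v1 * (b⁻¹ * (b - 1)) := by
    have h := eq_neg_of_add_eq_zero_left E1
    rw [h, ← mul_neg, neg_sub, hbinv]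
  have F2 : v0 * (b - 1) = v1 * (a⁻¹ * (a - 1)) := by
    have h := eq_neg_of_add_eq_zero_left E2
    calc v0 * (b - 1) = -(v0 * (1 - b)) := by rw [← mul_neg, neg_sub]
      _ = v1 * (1 - a⁻¹) := by rw [h, neg_neg]
      _ = v1 * (a⁻¹ * (a - 1)) := by rw [hainv]
  by_cases ha1 : a = 1
  · subst ha1
    have hb1 : b ≠ 1 := fun h => hab h.symm
    have hw : b - 1 ≠ 0 := sub_ne_zero.mpr hb1
    have hv1 : v1 = 0 := by
      have h0 : v1 * (b⁻¹ * (b - 1)) = 0 := by rw [← F1, sub_self, mul_zero]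
      exact (mul_eq_zero.mp h0).resolve_right (mul_ne_zero (inv_ne_zero hb) hw)
    have hv0 : v0 = 0 := by
      have h0 : v0 * (b - 1) = 0 := by rw [F2, hv1, zero_mul]
      exact (mul_eq_zero.mp h0).resolve_right hw
    exact ⟨hv0, hv1⟩
  have hu : a - 1 ≠ 0 := sub_ne_zero.mpr ha1
  by_cases hb1 : b = 1
  · subst hb1
    have hv1 : v1 = 0 := by
      have h0 : v1 * (a⁻¹ * (a - 1)) = 0 := by rw [← F2, sub_self, mul_zero]
      exact (mul_eq_zero.mp h0).resolve_right (mul_ne_zero (inv_ne_zero ha) hu)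
    have hv0 : v0 = 0 := by
      have h0 : v0 * (a - 1) = 0 := by rw [F1, hv1, zero_mul]
      exact (mul_eq_zero.mp h0).resolve_right hu
    exact ⟨hv0, hv1⟩
  have hw : b - 1 ≠ 0 := sub_ne_zero.mpr hb1
  by_cases hv0 : v0 = 0
  · refine ⟨hv0, ?_⟩
    have h0 : v1 * (b⁻¹ * (b - 1)) = 0 := by rw [← F1, hv0, zero_mul]
    exact (mul_eq_zero.mp h0).resolve_right (mul_ne_zero (inv_ne_zero hb) hw)
  exfalso
  have hG1 : v0 * ((a - 1) * ((b - 1)⁻¹ * b)) = v1 := by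
    calc v0 * ((a - 1) * ((b - 1)⁻¹ * b))
        = (v0 * (a - 1)) * ((b - 1)⁻¹ * b) := by rw [mul_assoc]
      _ = (v1 * (b⁻¹ * (b - 1))) * ((b - 1)⁻¹ * b) := by rw [F1]
      _ = v1 * ((b⁻¹ * (b - 1)) * ((b - 1)⁻¹ * b)) := by rw [mul_assoc]
      _ = v1 := by rw [aux_cancel4 hb hw, mul_one]
  have hG2 : v0 * ((b - 1) * ((a - 1)⁻¹ * a)) = v1 := by
    calc v0 * ((b - 1) * ((a - 1)⁻¹ * a))
        = (v0 * (b - 1)) * ((a - 1)⁻¹ * a) := by rw [mul_assoc]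
      _ = (v1 * (a⁻¹ * (a - 1))) * ((a - 1)⁻¹ * a) := by rw [F2]
      _ = v1 * ((a⁻¹ * (a - 1)) * ((a - 1)⁻¹ * a)) := by rw [mul_assoc]
      _ = v1 := by rw [aux_cancel4 ha hu, mul_one]
  have hG : (a - 1) * ((b - 1)⁻¹ * b) = (b - 1) * ((a - 1)⁻¹ * a) :=
    mul_left_cancel₀ hv0 (hG1.trans hG2.symm)
  have hH : (a - 1) + (a - 1) * (b - 1)⁻¹ = (b - 1) + (b - 1) * (a - 1)⁻¹ := by
    have e1 : (a - 1) * ((b - 1)⁻¹ * b) = (a - 1) + (a - 1) * (b - 1)⁻¹ := by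
      rw [aux_invmulself hw, mul_add, mul_one]
    have e2 : (b - 1) * ((a - 1)⁻¹ * a) = (b - 1) + (b - 1) * (a - 1)⁻¹ := by
      rw [aux_invmulself hu, mul_add, mul_one]
    rw [← e1, ← e2]; exact hG
  have hba : ((b - 1) + 1) * ((a - 1) + 1) = 1 :=
    aux_key2 hu hw (fun h => hab (by rwa [sub_left_inj] at h)) hH
  rw [sub_add_cancel, sub_add_cancel] at hba
  have hfin : b⁻¹ = a := by
    rw [← mul_one b⁻¹, ← hba, ← mul_assoc, inv_mul_cancel₀ hb, one_mul]
  exact hab' hfin.symm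

/-- The pairing matrix of the permutation-theorem example: it is singular iff `a = b` or
`a = b⁻¹`; in particular singularity forces `a` and `b` to commute. -/
theorem stmt12 (D : Type*) [DivisionRing D] (a b : D) (ha : a ≠ 0) (hb : b ≠ 0) :
    (¬ IsUnit (!![(1 : D), a, a, 1; 1, b⁻¹, b⁻¹, 1; 1, a, 1, b; 1, b⁻¹, 1, a⁻¹]) ↔
        (a = b ∨ a = b⁻¹)) ∧
      (¬ IsUnit (!![(1 : D), a, a, 1; 1, b⁻¹, b⁻¹, 1; 1, a, 1, b; 1, b⁻¹, 1, a⁻¹]) →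
        a * b = b * a) := by
  have main : ¬ IsUnit (!![(1 : D), a, a, 1; 1, b⁻¹, b⁻¹, 1; 1, a, 1, b; 1, b⁻¹, 1, a⁻¹]) ↔
      (a = b ∨ a = b⁻¹) := by
    constructor
    · intro hns
      by_contra hcon
      push_neg at hcon
      obtain ⟨hab, hab'⟩ := hcon
      apply hns
      apply aux_isUnit_of_left_ker_trivial
      intro v hv
      have c0 := congrFun hv 0
      have c1 := congrFun hv 1
      have c2 := congrFun hv 2
      have c3 := congrFun hv 3
      simp only [Matrix.vecMul, dotProduct, Fin.sum_univ_four] at c0 c1 c2 c3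
      simp [Matrix.vecHead, Matrix.vecTail] at c0 c1 c2 c3
      -- c0 : v 0 + v 1 + v 2 + v 3 = 0
      -- c1 : v 0 * a + v 1 * b⁻¹ + v 2 * a + v 3 * b⁻¹ = 0
      -- c2 : v 0 * a + v 1 * b⁻¹ + v 2 + v 3 = 0
      -- c3 : v 0 + v 1 + v 2 * b + v 3 * a⁻¹ = 0
      have ht : (v 0 + v 2) + (v 1 + v 3) = 0 := by rw [← c0]; abel
      have ht' : v 1 + v 3 = -(v 0 + v 2) := eq_neg_of_add_eq_zero_right ht
      have hs0 : (v 0 + v 2) * (a - b⁻¹) = 0 := by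
        calc (v 0 + v 2) * (a - b⁻¹)
            = (v 0 + v 2) * a + (v 1 + v 3) * b⁻¹ := by rw [ht']; noncomm_ring
          _ = v 0 * a + v 1 * b⁻¹ + v 2 * a + v 3 * b⁻¹ := by noncomm_ring
          _ = 0 := c1
      have hs : v 0 + v 2 = 0 :=
        (mul_eq_zero.mp hs0).resolve_right (sub_ne_zero.mpr hab')
      have hv2 : v 2 = -(v 0) := eq_neg_of_add_eq_zero_right hs
      have hv3 : v 3 = -(v 1) := by
        have := ht'
        rw [hs, neg_zero] at this
        exact eq_neg_of_add_eq_zero_right this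
      have E1 : v 0 * (a - 1) + v 1 * (b⁻¹ - 1) = 0 := by
        calc v 0 * (a - 1) + v 1 * (b⁻¹ - 1)
            = v 0 * a + v 1 * b⁻¹ + (-(v 0)) + (-(v 1)) := by noncomm_ring
          _ = v 0 * a + v 1 * b⁻¹ + v 2 + v 3 := by rw [hv2, hv3]
          _ = 0 := c2
      have E2 : v 0 * (1 - b) + v 1 * (1 - a⁻¹) = 0 := by
        calc v 0 * (1 - b) + v 1 * (1 - a⁻¹)
            = v 0 + v 1 + (-(v 0)) * b + (-(v 1)) * a⁻¹ := by noncomm_ring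
          _ = v 0 + v 1 + v 2 * b + v 3 * a⁻¹ := by rw [hv2, hv3]
          _ = 0 := c3
      obtain ⟨h0, h1⟩ := aux_key ha hb hab hab' E1 E2
      funext i
      fin_cases i <;> simp [h0, h1, hv2, hv3]
    · rintro (rfl | rfl)
      · -- a = b
        apply aux_not_isUnit_of_left_ann (v := ![a⁻¹, 1, -a⁻¹, -1])
        · intro h
          have := congrFun h 1
          simp at this
        · funext j
          fin_cases j <;>
            simp [Matrix.vecMul, dotProduct, Fin.sum_univ_four, Matrix.vecHead,
              Matrix.vecTail, inv_mul_cancel₀ ha]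
      · -- a = b⁻¹
        apply aux_not_isUnit_of_left_ann (v := ![1, -1, 0, 0])
        · intro h
          have := congrFun h 0
          simp at this
        · funext j
          fin_cases j <;>
            simp [Matrix.vecMul, dotProduct, Fin.sum_univ_four, Matrix.vecHead,
              Matrix.vecTail]
  refine ⟨main, fun hns => ?_⟩
  rcases main.mp hns with rfl | rfl
  · rfl
  · rw [inv_mul_cancel₀ hb, mul_inv_cancel₀ hb]
end
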